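/- arXiv:1111.4658 — 7 statements merged into one kernel-verified Lean document; each statement's English description precedes it below -/
import Mathlib

section
/- Let f : ℝ → ℝ be a C^k function (k < ∞ a natural number) with f(x₀) = 0. Then there exists a C^k function h : ℝ → ℝ whose zero set is exactly {x₀} and such that f^(4k+4)/h extends to a C^k function on ℝ (i.e., h divides f^(4k+4) in C^k(ℝ)). -/
/-!
Take `h = f² + (x - x₀)²`. Since `(a + b)ⁿ - bⁿ` is divisible by `a` and `n = 2k + 2` is even,
`f^(4k+4) = (h - (x - x₀)²)^(2k+2) = S h + (x - x₀)^(4k+4)` with `S` a polynomial in `f` and `x`,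
so it suffices that `(x - x₀)^(4k+4) / h` is `C^k`. Because `h ≥ (x - x₀)²`, every quotient
`u (x - x₀)^(2p) / h^q` with `u ∈ C^j` and `q + j < p` is `O((x - x₀)²)` at `x₀`, hence
differentiable there with derivative `0`; elsewhere its derivative is a sum of three quotients of
the same shape with `j` lowered by one, and induction on `j` shows it is `C^j`.
-/

open Filter Topology Asymptotics

theorem pow_div_pow_le_pow_sub {α : Type*} [Field α] [LinearOrder α] [IsStrictOrderedRing α]
    {a b : α} {p q : ℕ} (ha : 0 ≤ a) (hab : a ≤ b) (hqp : q ≤ p) :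
    a ^ p / b ^ q ≤ a ^ (p - q) := by
  have hle : a ^ q / b ^ q ≤ 1 :=
    div_le_one_of_le₀ (pow_le_pow_left₀ ha hab q) (pow_nonneg (ha.trans hab) q)
  calc a ^ p / b ^ q = a ^ (p - q) * (a ^ q / b ^ q) := by
        rw [mul_div_assoc', ← pow_add, Nat.sub_add_cancel hqp]
    _ ≤ a ^ (p - q) := mul_le_of_le_one_right (by positivity) hle

theorem pos_of_sq_sub_le {x x₀ d : ℝ} (hd : (x - x₀) ^ 2 ≤ d) (hx : x ≠ x₀) : 0 < d :=
  (sq_pos_of_ne_zero (sub_ne_zero.mpr hx)).trans_le hd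

noncomputable def flatQuotient (x₀ : ℝ) (D u : ℝ → ℝ) (p q : ℕ) (x : ℝ) : ℝ :=
  u x * (x - x₀) ^ (2 * p) / D x ^ q

namespace flatQuotient

variable {x₀ : ℝ} {D u : ℝ → ℝ} {p q : ℕ}

theorem abs_le (hD : ∀ x, (x - x₀) ^ 2 ≤ D x) (hqp : q ≤ p) (x : ℝ) :
    |flatQuotient x₀ D u p q x| ≤ |u x * (x - x₀) ^ (2 * (p - q))| := by
  have hDx : 0 ≤ D x := (sq_nonneg _).trans (hD x)
  rw [flatQuotient, mul_div_assoc, abs_mul, abs_mul, pow_mul, pow_mul,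
    abs_of_nonneg (div_nonneg (pow_nonneg (sq_nonneg (x - x₀)) p) (pow_nonneg hDx q)),
    abs_of_nonneg (pow_nonneg (sq_nonneg (x - x₀)) _)]
  gcongr
  exact pow_div_pow_le_pow_sub (sq_nonneg _) (hD x) hqp

theorem hasDerivAt_center (hD : ∀ x, (x - x₀) ^ 2 ≤ D x) (hu : ContinuousAt u x₀)
    (hqp : q < p) : HasDerivAt (flatQuotient x₀ D u p q) 0 x₀ := by
  obtain ⟨r, hr⟩ : ∃ r, p - q = r + 1 := ⟨p - q - 1, by omega⟩
  have hv : ContinuousAt (fun x => u x * (x - x₀) ^ (2 * r)) x₀ := by fun_prop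
  have hbound :
      flatQuotient x₀ D u p q =O[𝓝 x₀] fun x => u x * (x - x₀) ^ (2 * r) * ‖x - x₀‖ ^ 2 :=
    isBigO_of_le _ fun x => by
      simpa [hr, mul_add, pow_add, mul_assoc] using abs_le hD hqp.le x
  have hO : flatQuotient x₀ D u p q =O[𝓝 x₀] fun x => ‖x - x₀‖ ^ 2 := by
    simpa only [one_mul] using hbound.trans ((hv.isBigO_one ℝ).mul (isBigO_refl _ _))
  simpa using (hO.hasFDerivAt one_lt_two).hasDerivAt

theorem continuous (hD : ∀ x, (x - x₀) ^ 2 ≤ D x) (hDc : Continuous D) (hu : Continuous u)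
    (hqp : q < p) : Continuous (flatQuotient x₀ D u p q) := by
  refine continuous_iff_continuousAt.mpr fun x => ?_
  rcases eq_or_ne x x₀ with rfl | hx
  · exact (hasDerivAt_center hD hu.continuousAt hqp).continuousAt
  · exact ContinuousAt.div (by fun_prop) (by fun_prop)
      (pow_ne_zero q (pos_of_sq_sub_le (hD x) hx).ne')

theorem hasDerivAt (hD : ∀ x, (x - x₀) ^ 2 ≤ D x) (hDd : Differentiable ℝ D)
    (hu : Differentiable ℝ u) (hqp : q < p) (x : ℝ) :
    HasDerivAt (flatQuotient x₀ D u p q)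
      (flatQuotient x₀ D (deriv u) p q x
        + flatQuotient x₀ D (fun y => 2 * p * u y * (y - x₀)) (p - 1) q x
        + flatQuotient x₀ D (fun y => -q * u y * deriv D y) p (q + 1) x) x := by
  obtain ⟨p, rfl⟩ : ∃ p', p = p' + 1 := ⟨p - 1, by omega⟩
  rcases eq_or_ne x x₀ with rfl | hx
  · simpa [flatQuotient] using hasDerivAt_center hD hu.continuous.continuousAt hqp
  · have hDx := (pos_of_sq_sub_le (hD x) hx).ne'
    have := ((hu x).hasDerivAt.mul (((hasDerivAt_id x).sub_const x₀).pow (2 * (p + 1)))).div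
      ((hDd x).hasDerivAt.pow q) (pow_ne_zero q hDx)
    refine this.congr_deriv ?_
    rw [show 2 * (p + 1) - 1 = 2 * p + 1 by omega]
    rcases q with _ | q <;>
    · simp only [flatQuotient, Pi.mul_apply, Pi.pow_apply, id, Nat.add_sub_cancel]
      field_simp
      push_cast
      ring

theorem contDiff (hD : ∀ x, (x - x₀) ^ 2 ≤ D x) {j : ℕ} (hDj : ContDiff ℝ j D)
    (hu : ContDiff ℝ j u) (hpq : q + j < p) : ContDiff ℝ j (flatQuotient x₀ D u p q) := by
  induction j generalizing u p q with
  | zero =>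
    rw [Nat.cast_zero, contDiff_zero] at *
    exact continuous hD hDj hu hpq
  | succ j ih =>
    rw [Nat.cast_succ] at *
    obtain ⟨hDd, -, hD'⟩ := contDiff_succ_iff_deriv.mp hDj
    obtain ⟨hud, -, hu'⟩ := contDiff_succ_iff_deriv.mp hu
    have huj := hu.of_succ
    have hDj := hDj.of_succ
    have hF := hasDerivAt hD hDd hud (show q < p by omega)
    refine contDiff_succ_iff_deriv.mpr ⟨fun x => (hF x).differentiableAt, by simp, ?_⟩
    rw [show deriv (flatQuotient x₀ D u p q) = _ from funext fun x => (hF x).deriv]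
    exact ((ih hDj hu' (by omega)).add (ih hDj (by fun_prop) (by omega))).add
      (ih hDj (by fun_prop) (by omega))

theorem mul_pow (hD : ∀ x, (x - x₀) ^ 2 ≤ D x) (hp : 0 < p) (x : ℝ) :
    flatQuotient x₀ D u p q x * D x ^ q = u x * (x - x₀) ^ (2 * p) := by
  rcases eq_or_ne x x₀ with rfl | hx
  · simp [flatQuotient, hp.ne']
  · exact div_mul_cancel₀ _ (pow_ne_zero q (pos_of_sq_sub_le (hD x) hx).ne')

end flatQuotient

theorem stmt_1 (k : ℕ) (f : ℝ → ℝ) (hf : ContDiff ℝ (k : ℕ∞) f)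
    (x₀ : ℝ) (hx₀ : f x₀ = 0) :
    ∃ h : ℝ → ℝ, ContDiff ℝ (k : ℕ∞) h ∧ {x : ℝ | h x = 0} = {x₀} ∧
      ∃ g : ℝ → ℝ, ContDiff ℝ (k : ℕ∞) g ∧ ∀ x : ℝ, (f x) ^ (4 * k + 4) = g x * h x := by
  set D : ℝ → ℝ := fun x => f x ^ 2 + (x - x₀) ^ 2
  have hDge : ∀ x, (x - x₀) ^ 2 ≤ D x := fun x => le_add_of_nonneg_left (sq_nonneg (f x))
  have hfk : ContDiff ℝ k f := mod_cast hf
  have hDk : ContDiff ℝ k D := by fun_prop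
  refine ⟨D, mod_cast hDk, ?_, fun x => (∑ i ∈ Finset.range (2 * k + 2),
    (f x ^ 2) ^ i * (-(x - x₀) ^ 2) ^ (2 * k + 2 - 1 - i)) + flatQuotient x₀ D 1 (2 * k + 2) 1 x,
    ?_, fun x => ?_⟩
  · ext x
    simp only [Set.mem_ofPred_eq, Set.mem_singleton_iff]
    refine ⟨fun hx => by_contra fun hne => (pos_of_sq_sub_le (hDge x) hne).ne' hx, ?_⟩
    rintro rfl
    simp [D, hx₀]
  · have hquot : ContDiff ℝ k (flatQuotient x₀ D 1 (2 * k + 2) 1) :=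
      flatQuotient.contDiff hDge hDk contDiff_const (by omega)
    exact_mod_cast (by fun_prop : ContDiff ℝ k _)
  · have hgeom := (Commute.all (D x) (-(x - x₀) ^ 2)).geom_sum₂_mul_add (2 * k + 2)
    rw [add_neg_cancel_right, Even.neg_pow ⟨k + 1, by ring⟩, ← pow_mul, ← pow_mul] at hgeom
    have hq := flatQuotient.mul_pow hDge (u := 1) (q := 1) (p := 2 * k + 2) (by omega) x
    rw [pow_one, Pi.one_apply, one_mul] at hq
    rw [add_mul, hq]
    linear_combination -hgeom
end

section
/- Let f, g : ℝ → ℝ be C^k functions (k < ∞) with a common zero f(x) = g(x) = 0. Then h = f² + g² is a C^k function with h(x) = 0 such that h divides both f^(4k+4) and g^(4k+4) in C^k(ℝ), i.e., f^(4k+4)/h and g^(4k+4)/h extend to C^k functions. -/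
/-!
Write `N = 4k + 4`. Away from the common zeros of `f` and `g`, the quotient `f^N / (f² + g²)` is
`M ∘ (f, g)` with `M (u, v) = u^N / (u² + v²)`, so it suffices that `M` is `C^k` on `ℝ²`. More
generally `u^a v^b / (u² + v²)^m` is `C^n` as soon as `a + b > 2m + n`: it is bounded by
`‖(u, v)‖^(a + b - 2m)`, hence continuous at the origin (and differentiable there with derivative
`0` when the degree is at least `2`), and its partial derivatives are combinations of quotients of
the same shape whose degree is one less, so induction on `n` applies.
-/

open Asymptotics Filter Topology

noncomputable def monomialQuot (a b m : ℕ) (p : ℝ × ℝ) : ℝ :=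
  p.1 ^ a * p.2 ^ b / (p.1 ^ 2 + p.2 ^ 2) ^ m

lemma norm_sq_le_fst_sq_add_snd_sq (p : ℝ × ℝ) : ‖p‖ ^ 2 ≤ p.1 ^ 2 + p.2 ^ 2 := by
  rw [Prod.norm_def, Real.norm_eq_abs, Real.norm_eq_abs]
  rcases max_cases |p.1| |p.2| with ⟨h, _⟩ | ⟨h, _⟩ <;> rw [h, sq_abs] <;> nlinarith

lemma fst_sq_add_snd_sq_ne_zero {p : ℝ × ℝ} (hp : p ≠ 0) : p.1 ^ 2 + p.2 ^ 2 ≠ 0 :=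
  ((pow_pos (norm_pos_iff.mpr hp) 2).trans_le (norm_sq_le_fst_sq_add_snd_sq p)).ne'

lemma monomialQuot_zero {a b : ℕ} (m : ℕ) (hab : a + b ≠ 0) : monomialQuot a b m 0 = 0 := by
  rw [monomialQuot, Prod.fst_zero, Prod.snd_zero, ← pow_add, zero_pow hab, zero_div]

lemma abs_monomialQuot_le {a b m : ℕ} (h : 2 * m < a + b) (p : ℝ × ℝ) :
    |monomialQuot a b m p| ≤ ‖p‖ ^ (a + b - 2 * m) := by
  rcases eq_or_ne p 0 with rfl | hp
  · rw [monomialQuot_zero m (by omega), abs_zero]; positivity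
  have hs : ‖p‖ ^ 2 ≤ p.1 ^ 2 + p.2 ^ 2 := norm_sq_le_fst_sq_add_snd_sq p
  have hnum : |p.1 ^ a * p.2 ^ b| ≤ ‖p‖ ^ (a + b) := by
    rw [abs_mul, abs_pow, abs_pow, pow_add]
    have h1 : |p.1| ≤ ‖p‖ := norm_fst_le p
    have h2 : |p.2| ≤ ‖p‖ := norm_snd_le p
    gcongr
  have hden : ‖p‖ ^ (2 * m) ≤ (p.1 ^ 2 + p.2 ^ 2) ^ m := by
    rw [pow_mul]; gcongr
  have hpos : 0 < ‖p‖ := norm_pos_iff.mpr hp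
  calc |monomialQuot a b m p| ≤ ‖p‖ ^ (a + b) / ‖p‖ ^ (2 * m) := by
        rw [monomialQuot, abs_div, abs_of_pos (pow_pos ((pow_pos hpos 2).trans_le hs) m)]
        exact div_le_div₀ (by positivity) hnum (by positivity) hden
    _ = ‖p‖ ^ (a + b - 2 * m) := by
        rw [div_eq_iff (by positivity), ← pow_add, Nat.sub_add_cancel h.le]

noncomputable def monomialQuotFDeriv (a b m : ℕ) (p : ℝ × ℝ) : ℝ × ℝ →L[ℝ] ℝ :=
  (a * monomialQuot (a - 1) b m p - 2 * m * monomialQuot (a + 1) b (m + 1) p) •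
      ContinuousLinearMap.fst ℝ ℝ ℝ +
    (b * monomialQuot a (b - 1) m p - 2 * m * monomialQuot a (b + 1) (m + 1) p) •
      ContinuousLinearMap.snd ℝ ℝ ℝ

lemma hasFDerivAt_monomialQuot_of_ne_zero (a b m : ℕ) {p : ℝ × ℝ} (hp : p ≠ 0) :
    HasFDerivAt (monomialQuot a b m) (monomialQuotFDeriv a b m p) p := by
  have hs := fst_sq_add_snd_sq_ne_zero hp
  have hnum := ((hasDerivAt_pow a p.1).comp_hasFDerivAt p (hasFDerivAt_fst (𝕜 := ℝ))).mul
    ((hasDerivAt_pow b p.2).comp_hasFDerivAt p (hasFDerivAt_snd (𝕜 := ℝ)))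
  have hsum := ((hasDerivAt_pow 2 p.1).comp_hasFDerivAt p (hasFDerivAt_fst (𝕜 := ℝ))).add
    ((hasDerivAt_pow 2 p.2).comp_hasFDerivAt p (hasFDerivAt_snd (𝕜 := ℝ)))
  have hinv :=
    ((hasDerivAt_pow m (p.1 ^ 2 + p.2 ^ 2)).inv (pow_ne_zero m hs)).comp_hasFDerivAt p hsum
  have hM := hnum.mul hinv
  rw [show _ * _ = monomialQuot a b m by funext q; simp [monomialQuot, div_eq_mul_inv]] at hM
  refine hM.congr_fderiv ?_
  ext <;> rcases m with _ | m <;> simp [monomialQuotFDeriv, monomialQuot] <;> field_simp <;> ring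

lemma monomialQuotFDeriv_zero {a b m : ℕ} (h : 2 * m + 2 ≤ a + b) :
    monomialQuotFDeriv a b m 0 = 0 := by
  rw [monomialQuotFDeriv, monomialQuot_zero m (show a - 1 + b ≠ 0 by omega),
    monomialQuot_zero m (show a + (b - 1) ≠ 0 by omega),
    monomialQuot_zero (m + 1) (show a + 1 + b ≠ 0 by omega),
    monomialQuot_zero (m + 1) (show a + (b + 1) ≠ 0 by omega)]
  simp

lemma hasFDerivAt_monomialQuot_zero {a b m : ℕ} (h : 2 * m + 2 ≤ a + b) :
    HasFDerivAt (monomialQuot a b m) (monomialQuotFDeriv a b m 0) 0 := by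
  rw [monomialQuotFDeriv_zero h, hasFDerivAt_iff_isLittleO_nhds_zero]
  simp only [zero_add, monomialQuot_zero m (show a + b ≠ 0 by omega), sub_zero, zero_apply]
  refine (isBigO_of_le _ fun p => ?_).trans_isLittleO
    (isLittleO_norm_pow_id (n := a + b - 2 * m) (by omega))
  rw [Real.norm_eq_abs, norm_pow, norm_norm]
  exact abs_monomialQuot_le (by omega) p

lemma hasFDerivAt_monomialQuot {a b m : ℕ} (h : 2 * m + 2 ≤ a + b) (p : ℝ × ℝ) :
    HasFDerivAt (monomialQuot a b m) (monomialQuotFDeriv a b m p) p := by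
  rcases eq_or_ne p 0 with rfl | hp
  · exact hasFDerivAt_monomialQuot_zero h
  · exact hasFDerivAt_monomialQuot_of_ne_zero a b m hp

lemma continuous_monomialQuot {a b m : ℕ} (h : 2 * m < a + b) :
    Continuous (monomialQuot a b m) := by
  refine continuous_iff_continuousAt.mpr fun p => ?_
  rcases eq_or_ne p 0 with rfl | hp
  · have hlim : Tendsto (fun q : ℝ × ℝ => ‖q‖ ^ (a + b - 2 * m)) (𝓝 0) (𝓝 0) :=
      (by fun_prop : Continuous fun q : ℝ × ℝ => ‖q‖ ^ (a + b - 2 * m)).tendsto' 0 0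
        (by simp; omega)
    rw [ContinuousAt, monomialQuot_zero m (by omega)]
    exact squeeze_zero_norm
      (fun q => (abs_monomialQuot_le h q).trans_eq' (Real.norm_eq_abs _)) hlim
  · exact (by fun_prop : Continuous fun q : ℝ × ℝ => q.1 ^ a * q.2 ^ b).continuousAt.div
      (by fun_prop) (pow_ne_zero m (fst_sq_add_snd_sq_ne_zero hp))

lemma contDiff_monomialQuot (n : ℕ) {a b m : ℕ} (h : 2 * m + n < a + b) :
    ContDiff ℝ n (monomialQuot a b m) := by
  induction n generalizing a b m with
  | zero => exact contDiff_zero.mpr (continuous_monomialQuot (by omega))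
  | succ n ih =>
    push_cast
    refine contDiff_succ_iff_hasFDerivAt.mpr
      ⟨monomialQuotFDeriv a b m, ?_, hasFDerivAt_monomialQuot (by omega)⟩
    have := ih (a := a - 1) (b := b) (m := m) (by omega)
    have := ih (a := a + 1) (b := b) (m := m + 1) (by omega)
    have := ih (a := a) (b := b - 1) (m := m) (by omega)
    have := ih (a := a) (b := b + 1) (m := m + 1) (by omega)
    unfold monomialQuotFDeriv
    fun_prop

lemma monomialQuot_mul_pow {a b : ℕ} (m : ℕ) (hab : a + b ≠ 0) (p : ℝ × ℝ) :
    monomialQuot a b m p * (p.1 ^ 2 + p.2 ^ 2) ^ m = p.1 ^ a * p.2 ^ b := by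
  rcases eq_or_ne p 0 with rfl | hp
  · rw [monomialQuot_zero m hab, zero_mul, Prod.fst_zero, Prod.snd_zero, ← pow_add, zero_pow hab]
  · exact div_mul_cancel₀ _ (pow_ne_zero m (fst_sq_add_snd_sq_ne_zero hp))

lemma exists_contDiff_pow_eq_mul_sq_add_sq {k n : ℕ} (hn : k + 3 ≤ n) {u v : ℝ → ℝ}
    (hu : ContDiff ℝ k u) (hv : ContDiff ℝ k v) :
    ∃ q : ℝ → ℝ, ContDiff ℝ k q ∧ ∀ y, u y ^ n = q y * (u y ^ 2 + v y ^ 2) :=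
  ⟨fun y => monomialQuot n 0 1 (u y, v y),
    (contDiff_monomialQuot k (by omega)).comp (hu.prodMk hv),
    fun y => by
      simpa using (monomialQuot_mul_pow (a := n) (b := 0) 1 (by omega) (u y, v y)).symm⟩

theorem stmt_2 (k : ℕ) (f g : ℝ → ℝ) (hf : ContDiff ℝ (k : ℕ∞) f)
    (hg : ContDiff ℝ (k : ℕ∞) g) (x : ℝ) (hfx : f x = 0) (hgx : g x = 0) :
    ContDiff ℝ (k : ℕ∞) (fun y => f y ^ 2 + g y ^ 2) ∧
    (fun y => f y ^ 2 + g y ^ 2) x = 0 ∧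
    (∃ q : ℝ → ℝ, ContDiff ℝ (k : ℕ∞) q ∧
      ∀ y : ℝ, (f y) ^ (4 * k + 4) = q y * (f y ^ 2 + g y ^ 2)) ∧
    (∃ q : ℝ → ℝ, ContDiff ℝ (k : ℕ∞) q ∧
      ∀ y : ℝ, (g y) ^ (4 * k + 4) = q y * (f y ^ 2 + g y ^ 2)) := by
  obtain ⟨q, hq, hfq⟩ := exists_contDiff_pow_eq_mul_sq_add_sq (n := 4 * k + 4) (by omega) hf hg
  obtain ⟨r, hr, hgr⟩ := exists_contDiff_pow_eq_mul_sq_add_sq (n := 4 * k + 4) (by omega) hg hf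
  refine ⟨(hf.pow 2).add (hg.pow 2), by simp [hfx, hgx], ⟨q, hq, hfq⟩, ⟨r, hr, fun y => ?_⟩⟩
  rw [hgr, add_comm]
end

section
/- Let f : ℝ → ℝ be C^k (k < ∞) and x ≠ y two zeros of f. Then there exist C^k functions f₁, f₂, f₃ with f^(4k+4) = f₁·f₂·f₃, f₁(x) = 0, f₃(y) = 0, and the zero sets of f₁ and f₃ are disjoint. -/
open Real

lemma stmt_3_aux (k : ℕ) (f : ℝ → ℝ) (hf : ContDiff ℝ (k : ℕ∞) f)
    (x y : ℝ) (hxy : x < y) (hfx : f x = 0) (hfy : f y = 0) :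
    ∃ f₁ f₂ f₃ : ℝ → ℝ, ContDiff ℝ (k : ℕ∞) f₁ ∧ ContDiff ℝ (k : ℕ∞) f₂ ∧
      ContDiff ℝ (k : ℕ∞) f₃ ∧
      (∀ z : ℝ, (f z) ^ (4 * k + 4) = f₁ z * f₂ z * f₃ z) ∧
      f₁ x = 0 ∧ f₃ y = 0 ∧ {z : ℝ | f₁ z = 0} ∩ {z : ℝ | f₃ z = 0} = ∅ := by
  by_cases hA : ∃ m, x < m ∧ m < y ∧ f m ≠ 0
  · -- Case A: f is nonzero at some point m strictly between x and y
    obtain ⟨m, hxm, hmy, hfm⟩ := hA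
    have hcu : ContDiff ℝ (k : ℕ∞) (fun z : ℝ => expNegInvGlue (z - m)) :=
      expNegInvGlue.contDiff.comp (contDiff_id.sub contDiff_const)
    have hcv : ContDiff ℝ (k : ℕ∞) (fun z : ℝ => expNegInvGlue (m - z)) :=
      expNegInvGlue.contDiff.comp (contDiff_const.sub contDiff_id)
    have hD : ∀ z : ℝ, 0 < f z ^ 2 + (expNegInvGlue (z - m) + expNegInvGlue (m - z)) := by
      intro z
      have h1 : 0 ≤ f z ^ 2 := sq_nonneg _
      have h2 : 0 ≤ expNegInvGlue (z - m) := expNegInvGlue.nonneg _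
      have h3 : 0 ≤ expNegInvGlue (m - z) := expNegInvGlue.nonneg _
      rcases lt_trichotomy z m with h | rfl | h
      · have : 0 < expNegInvGlue (m - z) := expNegInvGlue.pos_of_pos (by linarith)
        linarith
      · have : 0 < f z ^ 2 := by positivity
        linarith
      · have : 0 < expNegInvGlue (z - m) := expNegInvGlue.pos_of_pos (by linarith)
        linarith
    have huv : ∀ z : ℝ, expNegInvGlue (z - m) * expNegInvGlue (m - z) = 0 := by
      intro z
      rcases le_total z m with h | h
      · rw [expNegInvGlue.zero_of_nonpos (by linarith), zero_mul]
      · rw [expNegInvGlue.zero_of_nonpos (by linarith : m - z ≤ 0), mul_zero]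
    refine ⟨fun z => f z ^ 2 + expNegInvGlue (z - m),
            fun z => f z ^ (4 * k + 2) /
              (f z ^ 2 + (expNegInvGlue (z - m) + expNegInvGlue (m - z))),
            fun z => f z ^ 2 + expNegInvGlue (m - z),
            (hf.pow 2).add hcu,
            (hf.pow (4 * k + 2)).div ((hf.pow 2).add (hcu.add hcv))
              (fun z => (hD z).ne'),
            (hf.pow 2).add hcv, ?_, ?_, ?_, ?_⟩
    · intro z
      have hDz := (hD z).ne'
      set u := expNegInvGlue (z - m) with hu
      set v := expNegInvGlue (m - z) with hv
      show f z ^ (4 * k + 4) =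
        (f z ^ 2 + u) * (f z ^ (4 * k + 2) / (f z ^ 2 + (u + v))) * (f z ^ 2 + v)
      have hfz : (f z ^ 2 + u) * (f z ^ 2 + v) = f z ^ 2 * (f z ^ 2 + (u + v)) := by
        linear_combination huv z
      symm
      calc (f z ^ 2 + u) * (f z ^ (4 * k + 2) / (f z ^ 2 + (u + v))) * (f z ^ 2 + v)
          = f z ^ (4 * k + 2) * ((f z ^ 2 + u) * (f z ^ 2 + v)) / (f z ^ 2 + (u + v)) := by
            ring
        _ = f z ^ (4 * k + 2) * (f z ^ 2 * (f z ^ 2 + (u + v))) / (f z ^ 2 + (u + v)) := by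
            rw [hfz]
        _ = f z ^ (4 * k + 2) * f z ^ 2 := by
            field_simp
        _ = f z ^ (4 * k + 4) := by rw [← pow_add]
    · simp [hfx, expNegInvGlue.zero_of_nonpos (by linarith : x - m ≤ 0)]
    · simp [hfy, expNegInvGlue.zero_of_nonpos (by linarith : m - y ≤ 0)]
    · rw [Set.eq_empty_iff_forall_notMem]
      rintro z ⟨h1, h3⟩
      simp only [Set.mem_setOf_eq] at h1 h3
      have hs := sq_nonneg (f z)
      have h2 : 0 ≤ expNegInvGlue (z - m) := expNegInvGlue.nonneg _
      have h4 : 0 ≤ expNegInvGlue (m - z) := expNegInvGlue.nonneg _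
      have hu0 : expNegInvGlue (z - m) = 0 := by linarith
      have hv0 : expNegInvGlue (m - z) = 0 := by linarith
      have hzm : z ≤ m := by
        by_contra h
        exact absurd hu0 (expNegInvGlue.pos_of_pos (by linarith)).ne'
      have hmz : m ≤ z := by
        by_contra h
        exact absurd hv0 (expNegInvGlue.pos_of_pos (by linarith)).ne'
      have : z = m := le_antisymm hzm hmz
      subst this
      have : f z ^ 2 = 0 := by linarith
      exact hfm (by nlinarith)
  · -- Case B: f vanishes identically on [x, y]
    push_neg at hA
    have hI : ∀ z : ℝ, x ≤ z → z ≤ y → f z = 0 := by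
      intro z h1 h2
      rcases h1.eq_or_lt with rfl | h1'
      · exact hfx
      rcases h2.eq_or_lt with rfl | h2'
      · exact hfy
      exact hA z h1' h2'
    have hyx : (0 : ℝ) < y - x := by linarith
    set θ : ℝ → ℝ := fun z => Real.smoothTransition ((z - x) / (y - x)) with hθdef
    have hcθ : ContDiff ℝ (k : ℕ∞) θ :=
      Real.smoothTransition.contDiff.comp ((contDiff_id.sub contDiff_const).div_const _)
    have hθx : θ x = 0 := by
      simp only [hθdef]
      rw [Real.smoothTransition.zero_of_nonpos (by simp)]
    have hθy : θ y = 1 := by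
      simp only [hθdef]
      rw [div_self hyx.ne', Real.smoothTransition.one]
    have key : ∀ z : ℝ, f z = 0 ∨ θ z * (1 - θ z) = 0 := by
      intro z
      by_cases hz : f z = 0
      · exact Or.inl hz
      right
      have hzo : z < x ∨ y < z := by
        by_contra h
        push_neg at h
        exact hz (hI z h.1 h.2)
      rcases hzo with h | h
      · have : θ z = 0 := by
          simp only [hθdef]
          exact Real.smoothTransition.zero_of_nonpos
            (div_nonpos_of_nonpos_of_nonneg (by linarith) hyx.le)
        rw [this, zero_mul]
      · have : θ z = 1 := by
          simp only [hθdef]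
          exact Real.smoothTransition.one_of_one_le ((one_le_div hyx).2 (by linarith))
        rw [this]
        ring
    have hQ : ∀ z : ℝ, 0 < θ z ^ 2 + (1 - θ z) ^ 2 := by
      intro z
      nlinarith [sq_nonneg (θ z), sq_nonneg (1 - θ z), sq_nonneg (2 * θ z - 1)]
    refine ⟨fun z => f z ^ 2 * (1 - θ z) + θ z,
            fun z => f z ^ (4 * k + 2) / (θ z ^ 2 + (1 - θ z) ^ 2),
            fun z => f z ^ 2 * θ z + (1 - θ z),
            ((hf.pow 2).mul (contDiff_const.sub hcθ)).add hcθ,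
            (hf.pow (4 * k + 2)).div ((hcθ.pow 2).add ((contDiff_const.sub hcθ).pow 2))
              (fun z => (hQ z).ne'),
            ((hf.pow 2).mul hcθ).add (contDiff_const.sub hcθ), ?_, ?_, ?_, ?_⟩
    · intro z
      show f z ^ (4 * k + 4) =
        (f z ^ 2 * (1 - θ z) + θ z) * (f z ^ (4 * k + 2) / (θ z ^ 2 + (1 - θ z) ^ 2)) *
          (f z ^ 2 * θ z + (1 - θ z))
      rcases key z with h | h
      · simp only [h]
        rw [zero_pow (by omega : 4 * k + 4 ≠ 0), zero_pow (by omega : 4 * k + 2 ≠ 0)]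
        simp
      · rcases mul_eq_zero.1 h with h' | h'
        · rw [h']
          have h2 : (1 : ℝ) - 0 = 1 := by norm_num
          rw [h2]
          rw [show 4 * k + 4 = 2 + (4 * k + 2) by omega, pow_add]
          norm_num
        · have h'' : θ z = 1 := by linarith
          rw [h'']
          rw [show 4 * k + 4 = 2 + (4 * k + 2) by omega, pow_add]
          norm_num
          ring
    · simp [hfx, hθx]
    · simp [hfy, hθy]
    · rw [Set.eq_empty_iff_forall_notMem]
      rintro z ⟨h1, h3⟩
      simp only [Set.mem_setOf_eq] at h1 h3
      have hsum : f z ^ 2 + 1 = 0 := by linear_combination h1 + h3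
      nlinarith [sq_nonneg (f z)]

theorem stmt_3 (k : ℕ) (f : ℝ → ℝ) (hf : ContDiff ℝ (k : ℕ∞) f)
    (x y : ℝ) (hxy : x ≠ y) (hfx : f x = 0) (hfy : f y = 0) :
    ∃ f₁ f₂ f₃ : ℝ → ℝ, ContDiff ℝ (k : ℕ∞) f₁ ∧ ContDiff ℝ (k : ℕ∞) f₂ ∧
      ContDiff ℝ (k : ℕ∞) f₃ ∧
      (∀ z : ℝ, (f z) ^ (4 * k + 4) = f₁ z * f₂ z * f₃ z) ∧
      f₁ x = 0 ∧ f₃ y = 0 ∧ {z : ℝ | f₁ z = 0} ∩ {z : ℝ | f₃ z = 0} = ∅ := by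
  rcases hxy.lt_or_gt with h | h
  · exact stmt_3_aux k f hf x y h hfx hfy
  · obtain ⟨g₁, g₂, g₃, c1, c2, c3, hprod, hg1, hg3, hdisj⟩ :=
      stmt_3_aux k f hf y x h hfy hfx
    exact ⟨g₃, g₂, g₁, c3, c2, c1, fun z => by rw [hprod z]; ring, hg3, hg1,
      by rw [Set.inter_comm]; exact hdisj⟩
end

section
/- Let T : C(ℝ, ℝ) → C(ℝ, ℝ) be a multiplicative bijection. Then for all f, g ∈ C(ℝ), the zero sets Z(f) and Z(g) intersect if and only if Z(Tf) and Z(Tg) intersect. -/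
/-- A function in `C(ℝ, ℝ)` has a zero iff it is not invertible. -/
lemma aux_zero_iff_no_inv (h : C(ℝ, ℝ)) :
    (∃ x, h x = 0) ↔ ¬ ∃ k : C(ℝ, ℝ), h * k = 1 := by
  constructor
  · rintro ⟨x, hx⟩ ⟨k, hk⟩
    have := congrArg (fun u : C(ℝ, ℝ) => u x) hk
    simp [hx] at this
  · intro hno
    by_contra hne
    push_neg at hne
    exact hno ⟨⟨fun x => (h x)⁻¹, h.continuous.inv₀ hne⟩,
      by ext x; exact mul_inv_cancel₀ (hne x)⟩

/-- Common zero iff common non-unit divisor. -/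
lemma aux_common_zero_iff (f g : C(ℝ, ℝ)) :
    (∃ x, f x = 0 ∧ g x = 0) ↔
      ∃ h a b : C(ℝ, ℝ), f = h * a ∧ g = h * b ∧ ∃ x, h x = 0 := by
  constructor
  · rintro ⟨x₀, hf0, hg0⟩
    set H : ℝ → ℝ := fun x => Real.sqrt (max |f x| |g x|) with hH
    have hHnn : ∀ x, 0 ≤ H x := fun x => Real.sqrt_nonneg _
    have hmaxnn : ∀ x, 0 ≤ max |f x| |g x| := fun x =>
      le_trans (abs_nonneg _) (le_max_left _ _)
    have hH2 : ∀ x, H x * H x = max |f x| |g x| := fun x =>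
      Real.mul_self_sqrt (hmaxnn x)
    have hfle : ∀ x, |f x| ≤ H x * H x := fun x => (hH2 x).symm ▸ le_max_left _ _
    have hgle : ∀ x, |g x| ≤ H x * H x := fun x => (hH2 x).symm ▸ le_max_right _ _
    have contH : Continuous H :=
      Real.continuous_sqrt.comp
        ((continuous_abs.comp f.continuous).max (continuous_abs.comp g.continuous))
    -- division construction
    have key : ∀ F : C(ℝ, ℝ), (∀ x, |F x| ≤ H x * H x) →
        ∃ A : C(ℝ, ℝ), F = (⟨H, contH⟩ : C(ℝ, ℝ)) * A := by
      intro F hFle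
      set A : ℝ → ℝ := fun x => if H x = 0 then 0 else F x / H x with hA
      have boundA : ∀ x, |A x| ≤ H x := by
        intro x
        by_cases hx : H x = 0
        · simp [hA, hx, hHnn x]
        · have hxpos : 0 < H x := lt_of_le_of_ne (hHnn x) (Ne.symm hx)
          simp only [hA, hx, if_false]
          rw [abs_div, abs_of_pos hxpos, div_le_iff₀ hxpos]
          exact hFle x
      have contA : Continuous A := by
        rw [continuous_iff_continuousAt]
        intro x
        by_cases hx : H x = 0
        · have hA0 : A x = 0 := by simp [hA, hx]
          rw [ContinuousAt, hA0]
          have hHt : Filter.Tendsto H (nhds x) (nhds 0) := by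
            have := contH.continuousAt (x := x)
            rwa [ContinuousAt, hx] at this
          exact squeeze_zero_norm (fun y => by
            simpa [Real.norm_eq_abs] using boundA y) hHt
        · have hopen : IsOpen {y : ℝ | H y ≠ 0} :=
            isOpen_ne.preimage contH
          have hev : ∀ᶠ y in nhds x, A y = F y / H y := by
            filter_upwards [hopen.mem_nhds hx] with y hy
            simp [hA, hy]
          have : ContinuousAt (fun y => F y / H y) x :=
            (F.continuous.continuousAt).div contH.continuousAt hx
          exact this.congr (Filter.EventuallyEq.symm hev)
      refine ⟨⟨A, contA⟩, ?_⟩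
      ext x
      by_cases hx : H x = 0
      · have : |F x| ≤ 0 := by simpa [hx] using hFle x
        have hF0 : F x = 0 := abs_nonpos_iff.mp this
        simp [hF0, hx, hA]
      · simp only [ContinuousMap.mul_apply, ContinuousMap.coe_mk, hA, hx, if_false]
        field_simp
    obtain ⟨A, hAeq⟩ := key f hfle
    obtain ⟨B, hBeq⟩ := key g hgle
    refine ⟨⟨H, contH⟩, A, B, hAeq, hBeq, x₀, ?_⟩
    simp [hH, hf0, hg0]
  · rintro ⟨h, a, b, hf, hg, x, hx⟩
    exact ⟨x, by simp [hf, hx], by simp [hg, hx]⟩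

theorem stmt_5 (T : C(ℝ, ℝ) → C(ℝ, ℝ)) (hbij : Function.Bijective T)
    (hmul : ∀ f g : C(ℝ, ℝ), T (f * g) = T f * T g) :
    ∀ f g : C(ℝ, ℝ),
      (∃ x, f x = 0 ∧ g x = 0) ↔ (∃ x, T f x = 0 ∧ T g x = 0) := by
  -- T 1 = 1
  have hT1 : T 1 = 1 := by
    by_contra hne
    have he : ∀ f : C(ℝ, ℝ), T f = T f * T 1 := fun f => by
      rw [← hmul]; rw [mul_one]
    have : ∃ x, T 1 x ≠ 1 := by
      by_contra hc
      push_neg at hc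
      exact hne (by ext x; simpa using hc x)
    obtain ⟨x, hx⟩ := this
    -- T 1 x = T 1 x * T 1 x, and T 1 x ≠ 1 forces T 1 x = 0
    have h11 : T 1 x = T 1 x * T 1 x := by
      have := congrArg (fun u : C(ℝ, ℝ) => u x) (he 1)
      simpa using this
    have hx0 : T 1 x = 0 := by
      have hfac : T 1 x * (T 1 x - 1) = 0 := by nlinarith [h11]
      rcases mul_eq_zero.mp hfac with h | h
      · exact h
      · exact absurd (by linarith : T 1 x = 1) hx
    obtain ⟨f, hf⟩ := hbij.2 1
    have := congrArg (fun u : C(ℝ, ℝ) => u x) (he f)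
    rw [hf] at this
    simp [hx0] at this
  -- unit transfer
  have hunit : ∀ h : C(ℝ, ℝ), (∃ x, h x = 0) ↔ ∃ x, T h x = 0 := by
    intro h
    rw [aux_zero_iff_no_inv, aux_zero_iff_no_inv]
    constructor
    · intro hno ⟨k', hk'⟩
      obtain ⟨k, rfl⟩ := hbij.2 k'
      exact hno ⟨k, hbij.1 (by rw [hmul, hk', hT1])⟩
    · intro hno ⟨k, hk⟩
      exact hno ⟨T k, by rw [← hmul, hk, hT1]⟩
  intro f g
  rw [aux_common_zero_iff, aux_common_zero_iff]
  constructor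
  · rintro ⟨h, a, b, hf, hg, hz⟩
    exact ⟨T h, T a, T b, by rw [hf, hmul], by rw [hg, hmul], (hunit h).mp hz⟩
  · rintro ⟨h', a', b', hf, hg, hz⟩
    obtain ⟨h, rfl⟩ := hbij.2 h'
    obtain ⟨a, rfl⟩ := hbij.2 a'
    obtain ⟨b, rfl⟩ := hbij.2 b'
    exact ⟨h, a, b, hbij.1 (by rw [hf, hmul]), hbij.1 (by rw [hg, hmul]),
      (hunit h).mpr hz⟩
end

section
/- Let V, W, U : C(M) → C(M) with V bijective and V(fg) = W(f)·U(g) for all f, g. Setting c = W(1) and d = U(1), the functions c and d never vanish, and the map Tf = Vf/(c·d) is a multiplicative bijection: T(fg) = Tf·Tg. -/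
/-! Evaluating the functional equation at `f = 1` or `g = 1` shows `V (f * g) * V 1 = V f * V g`,
and a preimage of `1` under `V` makes `W 1` and `U 1` invertible, hence nowhere zero.
So `V 1 = W 1 * U 1` is a unit and `T = V · (V 1)⁻¹` is multiplicative; it is bijective as the
composite of `V` with multiplication by a unit. -/

section FunctionalEquation

variable {A B : Type*} [MulOneClass A] [CommMonoid B] {V W U : A → B}

theorem isUnit_left_one_of_map_mul (hV : Function.Surjective V)
    (hmul : ∀ f g, V (f * g) = W f * U g) : IsUnit (W 1) := by
  obtain ⟨g, hg⟩ := hV 1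
  exact IsUnit.of_mul_eq_one (U g) (by rw [← hmul, one_mul, hg])

theorem isUnit_right_one_of_map_mul (hV : Function.Surjective V)
    (hmul : ∀ f g, V (f * g) = W f * U g) : IsUnit (U 1) := by
  obtain ⟨f, hf⟩ := hV 1
  exact IsUnit.of_mul_eq_one_right (W f) (by rw [← hmul, mul_one, hf])

theorem map_one_eq_of_map_mul (hmul : ∀ f g, V (f * g) = W f * U g) : V 1 = W 1 * U 1 := by
  rw [← hmul, one_mul]

theorem map_mul_mul_map_one_of_map_mul (hmul : ∀ f g, V (f * g) = W f * U g) (f g : A) :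
    V (f * g) * V 1 = V f * V g := by
  have hf := hmul f 1
  have hg := hmul 1 g
  rw [mul_one] at hf
  rw [one_mul] at hg
  rw [hmul, hf, hg, map_one_eq_of_map_mul hmul]
  ac_rfl

theorem map_mul_mul_inv_of_map_mul (hmul : ∀ f g, V (f * g) = W f * U g) {u : Bˣ}
    (hu : (u : B) = V 1) (f g : A) :
    V (f * g) * ↑u⁻¹ = V f * ↑u⁻¹ * (V g * ↑u⁻¹) := by
  calc V (f * g) * ↑u⁻¹ = V (f * g) * V 1 * ↑u⁻¹ * ↑u⁻¹ := by
        rw [← hu, mul_assoc _ (u : B), Units.mul_inv, mul_one]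
    _ = V f * ↑u⁻¹ * (V g * ↑u⁻¹) := by
        rw [map_mul_mul_map_one_of_map_mul hmul]
        ac_rfl

end FunctionalEquation

theorem ContinuousMap.units_inv_apply {X R : Type*} [TopologicalSpace X] [TopologicalSpace R]
    [DivisionMonoid R] [ContinuousMul R] (u : C(X, R)ˣ) (x : X) : (↑u⁻¹ : C(X, R)) x = ((u : C(X, R)) x)⁻¹ :=
  eq_inv_of_mul_eq_one_left (by rw [← ContinuousMap.mul_apply, Units.inv_mul, one_apply])

theorem stmt_14_general (M : Type*) [TopologicalSpace M]
    (V W U : C(M, ℝ) → C(M, ℝ)) (hV : Function.Bijective V)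
    (hmul : ∀ f g : C(M, ℝ), V (f * g) = W f * U g) :
    (∀ x : M, W 1 x ≠ 0 ∧ U 1 x ≠ 0) ∧
    ∃ T : C(M, ℝ) → C(M, ℝ), Function.Bijective T ∧
      (∀ (f : C(M, ℝ)) (x : M), T f x = V f x / (W 1 x * U 1 x)) ∧
      (∀ f g : C(M, ℝ), T (f * g) = T f * T g) := by
  have hW := isUnit_left_one_of_map_mul hV.surjective hmul
  have hU := isUnit_right_one_of_map_mul hV.surjective hmul
  obtain ⟨u, hu⟩ : IsUnit (V 1) := map_one_eq_of_map_mul hmul ▸ hW.mul hU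
  refine ⟨fun x => ⟨(ContinuousMap.isUnit_iff_forall_ne_zero _).1 hW x,
      (ContinuousMap.isUnit_iff_forall_ne_zero _).1 hU x⟩,
    fun f => V f * ↑u⁻¹, (Units.mulRight_bijective u⁻¹).comp hV, fun f x => ?_,
    map_mul_mul_inv_of_map_mul hmul hu⟩
  rw [ContinuousMap.mul_apply, ContinuousMap.units_inv_apply, hu, map_one_eq_of_map_mul hmul,
    div_eq_mul_inv, ContinuousMap.mul_apply]

theorem stmt_14 (n : ℕ) (M : Type*) [TopologicalSpace M]
    [ChartedSpace (EuclideanSpace ℝ (Fin n)) M]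
    (V W U : C(M, ℝ) → C(M, ℝ)) (hV : Function.Bijective V)
    (hmul : ∀ f g : C(M, ℝ), V (f * g) = W f * U g) :
    (∀ x : M, W 1 x ≠ 0 ∧ U 1 x ≠ 0) ∧
    ∃ T : C(M, ℝ) → C(M, ℝ), Function.Bijective T ∧
      (∀ (f : C(M, ℝ)) (x : M), T f x = V f x / (W 1 x * U 1 x)) ∧
      (∀ f g : C(M, ℝ), T (f * g) = T f * T g) :=
  stmt_14_general M V W U hV hmul
end

section
/- Let F be a bijection of the open subsets of ℝ satisfying F(U₁ ∩ U₂) = F(U₁) ∩ F(U₂). Then there exists a bijection u : ℝ → ℝ such that F(U) = u '' U (the image of U under u) for every open set U; moreover u is an open map and continuous. -/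
/-!
An intersection-preserving bijection of the open sets is an order isomorphism of the frame of
opens. In a T1 space the coatoms of that frame are exactly the complements of points, so the
isomorphism induces a bijection `u` of points with `F {x}ᶜ = {u x}ᶜ`. Since `y ∈ V` iff
`V ⊈ {y}ᶜ`, this forces `F U = u '' U`; then `u` and `u⁻¹` both map open sets to open sets.
-/

open TopologicalSpace

namespace TopologicalSpace.Opens

section OrderIso

variable {X Y : Type*} [TopologicalSpace X] [TopologicalSpace Y] [T1Space X] [T1Space Y]

theorem le_compl_singleton_iff {U : Opens X} {x : X} :
    U ≤ ({x} : Closeds X).compl ↔ x ∉ U := by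
  rw [← SetLike.coe_subset_coe, Closeds.coe_compl, Closeds.coe_singleton,
    Set.subset_compl_singleton_iff, SetLike.mem_coe]

theorem compl_singleton_injective : Function.Injective fun x : X ↦ ({x} : Closeds X).compl :=
  fun a b hab ↦ Set.singleton_injective <| compl_injective <| by
    simpa [← SetLike.coe_set_eq] using hab

theorem exists_orderIso_apply_compl_singleton (e : Opens X ≃o Opens Y) (x : X) :
    ∃ y, e ({x} : Closeds X).compl = ({y} : Closeds Y).compl :=
  isCoatom_iff.1 <| (e.isCoatom_iff _).2 <| isCoatom_iff.2 ⟨x, rfl⟩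

theorem exists_equiv_of_orderIso (e : Opens X ≃o Opens Y) :
    ∃ u : X ≃ Y, ∀ x, e ({x} : Closeds X).compl = ({u x} : Closeds Y).compl := by
  choose u hu using exists_orderIso_apply_compl_singleton e
  choose v hv using exists_orderIso_apply_compl_singleton e.symm
  refine ⟨⟨u, v, fun x ↦ ?_, fun y ↦ ?_⟩, hu⟩
  · apply compl_singleton_injective
    simp only [← hv, ← hu, OrderIso.symm_apply_apply]
  · apply compl_singleton_injective
    simp only [← hu, ← hv, OrderIso.apply_symm_apply]

theorem exists_homeomorph_of_orderIso (e : Opens X ≃o Opens Y) :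
    ∃ h : X ≃ₜ Y, ∀ U : Opens X, (e U : Set Y) = h '' U := by
  obtain ⟨u, hu⟩ := exists_equiv_of_orderIso e
  have apply_eq_image (U : Opens X) : (e U : Set Y) = u '' U := by
    ext y
    have hy : ({y} : Closeds Y).compl = e ({u.symm y} : Closeds X).compl := by
      rw [hu, u.apply_symm_apply]
    rw [u.image_eq_preimage_symm, Set.mem_preimage, SetLike.mem_coe, SetLike.mem_coe,
      ← not_iff_not, ← le_compl_singleton_iff, ← le_compl_singleton_iff, hy, e.le_iff_le]
  have isOpenMap : IsOpenMap u := fun U hU ↦ apply_eq_image ⟨U, hU⟩ ▸ (e ⟨U, hU⟩).isOpen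
  have continuous : Continuous u := continuous_def.2 fun V hV ↦ by
    have hV' : (e (e.symm ⟨V, hV⟩) : Set Y) = V := by rw [e.apply_symm_apply]; rfl
    rw [← hV', apply_eq_image, u.preimage_image]
    exact (e.symm ⟨V, hV⟩).isOpen
  exact ⟨u.toHomeomorphOfContinuousOpen continuous isOpenMap, apply_eq_image⟩

end OrderIso

section BijOn

variable {X Y : Type*} [TopologicalSpace X] {F : Set X → Set Y}

theorem map_subset_map_iff_of_injOn (hinj : Set.InjOn F {U | IsOpen U})
    (hcap : ∀ U V : Set X, IsOpen U → IsOpen V → F (U ∩ V) = F U ∩ F V)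
    {U V : Set X} (hU : IsOpen U) (hV : IsOpen V) : F U ⊆ F V ↔ U ⊆ V := by
  rw [← Set.inter_eq_left, ← hcap U V hU hV, hinj.eq_iff (hU.inter hV) hU, Set.inter_eq_left]

theorem exists_orderIso_of_bijOn [TopologicalSpace Y]
    (hbij : Set.BijOn F {U | IsOpen U} {U | IsOpen U})
    (hcap : ∀ U V : Set X, IsOpen U → IsOpen V → F (U ∩ V) = F U ∩ F V) :
    ∃ e : Opens X ≃o Opens Y, ∀ U : Opens X, (e U : Set Y) = F U := by
  let f : Opens X → Opens Y := fun U ↦ ⟨F U, hbij.mapsTo U.isOpen⟩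
  have hf : Function.Bijective f := by
    refine ⟨fun U V hUV ↦ ?_, fun V ↦ ?_⟩
    · exact Opens.ext <| hbij.injOn U.isOpen V.isOpen <| congrArg SetLike.coe hUV
    · obtain ⟨U, hU, hUV⟩ := hbij.surjOn V.isOpen
      exact ⟨⟨U, hU⟩, Opens.ext hUV⟩
  refine ⟨⟨Equiv.ofBijective f hf, fun {U V} ↦ ?_⟩, fun _ ↦ rfl⟩
  exact map_subset_map_iff_of_injOn hbij.injOn hcap U.isOpen V.isOpen

end BijOn

end TopologicalSpace.Opens

theorem stmt_18 (F : Set ℝ → Set ℝ)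
    (hbij : Set.BijOn F {U : Set ℝ | IsOpen U} {U : Set ℝ | IsOpen U})
    (hcap : ∀ U V : Set ℝ, IsOpen U → IsOpen V → F (U ∩ V) = F U ∩ F V) :
    ∃ u : ℝ → ℝ, Function.Bijective u ∧ (∀ U : Set ℝ, IsOpen U → F U = u '' U) ∧
      IsOpenMap u ∧ Continuous u := by
  obtain ⟨e, he⟩ := Opens.exists_orderIso_of_bijOn hbij hcap
  obtain ⟨h, hh⟩ := Opens.exists_homeomorph_of_orderIso e
  refine ⟨h, h.bijective, fun U hU ↦ ?_, h.isOpenMap, h.continuous⟩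
  exact (he ⟨U, hU⟩).symm.trans (hh ⟨U, hU⟩)
end

section
/- Let F be an intersection-preserving bijection of the open subsets of ℝ. Then F(ℝ) = ℝ, and F permutes the family of complements of singletons: for each x ∈ ℝ there exists y ∈ ℝ with F(ℝ \ {x}) = ℝ \ {y}. -/
theorem stmt_19 (F : Set ℝ → Set ℝ)
    (hbij : Set.BijOn F {U : Set ℝ | IsOpen U} {U : Set ℝ | IsOpen U})
    (hcap : ∀ U V : Set ℝ, IsOpen U → IsOpen V → F (U ∩ V) = F U ∩ F V) :
    F Set.univ = Set.univ ∧ ∀ x : ℝ, ∃ y : ℝ, F ({x}ᶜ) = ({y}ᶜ : Set ℝ) := by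
  have mono : ∀ U V : Set ℝ, IsOpen U → IsOpen V → U ⊆ V → F U ⊆ F V := by
    intro U V hU hV h
    have h1 := hcap U V hU hV
    rw [Set.inter_eq_left.mpr h] at h1
    rw [h1]; exact Set.inter_subset_right
  have rev : ∀ U V : Set ℝ, IsOpen U → IsOpen V → F U ⊆ F V → U ⊆ V := by
    intro U V hU hV h
    have h1 : F (U ∩ V) = F U := by
      rw [hcap U V hU hV, Set.inter_eq_left.mpr h]
    have h2 := hbij.injOn (hU.inter hV) hU h1
    rw [← h2]; exact Set.inter_subset_right
  have htop : F Set.univ = Set.univ := by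
    obtain ⟨U, hU, hFU⟩ := hbij.surjOn (show IsOpen (Set.univ : Set ℝ) from isOpen_univ)
    apply Set.eq_univ_of_univ_subset
    calc Set.univ = F U := hFU.symm
      _ ⊆ F Set.univ := mono U Set.univ hU isOpen_univ (Set.subset_univ U)
  refine ⟨htop, fun x => ?_⟩
  have hx : IsOpen ({x}ᶜ : Set ℝ) := isOpen_compl_singleton
  have hne : F ({x}ᶜ) ≠ Set.univ := by
    intro h
    have h2 := hbij.injOn hx (show IsOpen (Set.univ : Set ℝ) from isOpen_univ)
      (h.trans htop.symm)
    have : x ∈ ({x}ᶜ : Set ℝ) := h2 ▸ Set.mem_univ x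
    simp at this
  obtain ⟨y, hy⟩ := Set.ne_univ_iff_exists_notMem _ |>.mp hne
  obtain ⟨V, hV, hFV⟩ := hbij.surjOn (show IsOpen ({y}ᶜ : Set ℝ) from isOpen_compl_singleton)
  have hsub : F ({x}ᶜ) ⊆ {y}ᶜ := fun z hz hzy => hy (hzy ▸ hz)
  have hxV : ({x}ᶜ : Set ℝ) ⊆ V := rev _ _ hx hV (by rw [hFV]; exact hsub)
  by_cases hxmem : x ∈ V
  · exfalso
    have hVuniv : V = Set.univ := by
      apply Set.eq_univ_of_forall
      intro z
      by_cases hzx : z = x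
      · exact hzx ▸ hxmem
      · exact hxV hzx
    rw [hVuniv, htop] at hFV
    exact (hFV ▸ Set.mem_univ y) rfl
  · have : V = ({x}ᶜ : Set ℝ) := by
      apply Set.Subset.antisymm
      · intro z hz hzx
        exact hxmem (hzx ▸ hz)
      · exact hxV
    exact ⟨y, by rw [← this, hFV]⟩
end
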